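/- arXiv:2404.17880 — 4 statements merged into one kernel-verified Lean document; each statement's English description precedes it below -/
import Mathlib

section
/- Let J ⊆ K be monomial ideals of S = k[x_1,…,x_n] such that the variable x_n divides no minimal monomial generator of J and no minimal monomial generator of K, and let I = J + x_n·K. Then for all integers s ≥ 0 and t ≥ 1, (x_nK)^s J^t ∩ (x_nK)^{s+1} I^{t−1} = x_n·(x_nK)^s J^t, where I^0 = J^0 = S. -/
open MvPolynomial

universe u

section Aux

variable {σ : Type*} {R : Type u} [CommSemiring R]

/-- Product of two monomial ideals is the monomial ideal of pairwise sums of exponents. -/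
lemma span_mono_mul_aux (A B : Set (σ →₀ ℕ)) :
    Ideal.span ((fun d => (monomial d (1 : R) : MvPolynomial σ R)) '' A) *
      Ideal.span ((fun d => (monomial d (1 : R) : MvPolynomial σ R)) '' B) =
    Ideal.span ((fun d => (monomial d (1 : R) : MvPolynomial σ R)) '' Set.image2 (· + ·) A B) := by
  rw [Ideal.span_mul_span']
  congr 1
  rw [← Set.image2_mul, Set.image2_image_left, Set.image_image2]
  rw [Set.image2_image_right]
  refine Set.image2_congr fun a _ b _ => ?_
  rw [monomial_mul, one_mul]

/-- Powers of monomial ideals with `i`-free generators are monomial ideals with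
`i`-free generators. -/
lemma span_mono_pow_aux (A : Set (σ →₀ ℕ)) (i : σ) (hA : ∀ d ∈ A, d i = 0) (m : ℕ) :
    ∃ G : Set (σ →₀ ℕ), (∀ d ∈ G, d i = 0) ∧
      (Ideal.span ((fun d => (monomial d (1 : R) : MvPolynomial σ R)) '' A)) ^ m =
        Ideal.span ((fun d => (monomial d (1 : R) : MvPolynomial σ R)) '' G) := by
  induction m with
  | zero =>
    refine ⟨{0}, by simp, ?_⟩
    rw [pow_zero, Ideal.one_eq_top]
    symm
    rw [Ideal.eq_top_iff_one]
    have : (monomial (0 : σ →₀ ℕ) (1 : R) : MvPolynomial σ R) = 1 := by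
      simp [monomial_zero']
    refine Ideal.subset_span ?_
    exact ⟨0, rfl, this⟩
  | succ m ih =>
    obtain ⟨G, hG, hGe⟩ := ih
    refine ⟨Set.image2 (· + ·) G A, ?_, ?_⟩
    · rintro d ⟨a, ha, b, hb, rfl⟩
      simp [hG a ha, hA b hb]
    · rw [pow_succ, hGe, span_mono_mul_aux]

/-- Key colon property: if all generators are `i`-free, then `X i * h ∈ I → h ∈ I`. -/
lemma span_mono_colon_aux (G : Set (σ →₀ ℕ)) (i : σ) (hG : ∀ d ∈ G, d i = 0)
    (h : MvPolynomial σ R)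
    (hx : X i * h ∈ Ideal.span ((fun d => (monomial d (1 : R) : MvPolynomial σ R)) '' G)) :
    h ∈ Ideal.span ((fun d => (monomial d (1 : R) : MvPolynomial σ R)) '' G) := by
  rw [mem_ideal_span_monomial_image] at hx ⊢
  intro m hm
  have hmem : (Finsupp.single i 1 + m) ∈ (X i * h).support := by
    rw [mem_support_iff, coeff_X_mul]
    exact mem_support_iff.mp hm
  obtain ⟨d, hd, hle⟩ := hx _ hmem
  refine ⟨d, hd, fun j => ?_⟩
  by_cases hji : j = i
  · subst hji; simp [hG d hd]
  · have := hle j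
    simpa [Finsupp.single_apply, hji, Ne.symm hji] using this

end Aux

/-- Let `J ⊆ K` be monomial ideals of `S = k[x_0,…,x_n]` such that the last variable divides
no (minimal) monomial generator of `J` and no (minimal) monomial generator of `K` (equivalently,
`J` and `K` are generated by monomials in the other variables), and let `I = J + x·K` where
`x` is the last variable. Then for all `s ≥ 0` and `t ≥ 1`,
`(xK)^s J^t ∩ (xK)^{s+1} I^{t-1} = x·(xK)^s J^t`. -/
theorem intersection_monomial_ideals (k : Type u) [Field k] (n : ℕ)
    (J K : Ideal (MvPolynomial (Fin (n + 1)) k))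
    (GJ GK : Set (Fin (n + 1) →₀ ℕ))
    (hJ : J = Ideal.span ((fun d => (monomial d (1 : k) : MvPolynomial (Fin (n + 1)) k)) '' GJ))
    (hK : K = Ideal.span ((fun d => (monomial d (1 : k) : MvPolynomial (Fin (n + 1)) k)) '' GK))
    (hGJ : ∀ d ∈ GJ, d (Fin.last n) = 0)
    (hGK : ∀ d ∈ GK, d (Fin.last n) = 0)
    (hJK : J ≤ K)
    (s t : ℕ) (ht : 1 ≤ t) :
    ((Ideal.span {(X (Fin.last n) : MvPolynomial (Fin (n + 1)) k)} * K) ^ s * J ^ t) ⊓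
        ((Ideal.span {(X (Fin.last n) : MvPolynomial (Fin (n + 1)) k)} * K) ^ (s + 1) *
          (J + Ideal.span {(X (Fin.last n) : MvPolynomial (Fin (n + 1)) k)} * K) ^ (t - 1))
      = Ideal.span {(X (Fin.last n) : MvPolynomial (Fin (n + 1)) k)} *
          ((Ideal.span {(X (Fin.last n) : MvPolynomial (Fin (n + 1)) k)} * K) ^ s * J ^ t) := by
  obtain ⟨t', rfl⟩ : ∃ t', t = t' + 1 := ⟨t - 1, (Nat.succ_pred_eq_of_pos ht).symm⟩
  set x : MvPolynomial (Fin (n + 1)) k := X (Fin.last n) with hx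
  set Sx : Ideal (MvPolynomial (Fin (n + 1)) k) := Ideal.span {x} with hSx
  -- M := K ^ s * J ^ (t'+1) is a monomial ideal with x-free generators
  obtain ⟨GKs, hGKs, hKs⟩ := span_mono_pow_aux (R := k) GK (Fin.last n) hGK s
  obtain ⟨GJt, hGJt, hJt⟩ := span_mono_pow_aux (R := k) GJ (Fin.last n) hGJ (t' + 1)
  have hM : K ^ s * J ^ (t' + 1) =
      Ideal.span ((fun d => (monomial d (1 : k) : MvPolynomial (Fin (n + 1)) k)) ''
        Set.image2 (· + ·) GKs GJt) := by
    rw [hK, hJ, hKs, hJt, span_mono_mul_aux]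
  have hGM : ∀ d ∈ Set.image2 (· + ·) GKs GJt, d (Fin.last n) = 0 := by
    rintro d ⟨a, ha, b, hb, rfl⟩
    simp [hGKs a ha, hGJt b hb]
  have hP : (Sx * K) ^ s * J ^ (t' + 1) =
      Ideal.span {x ^ s} * (K ^ s * J ^ (t' + 1)) := by
    rw [mul_pow, ← Ideal.span_singleton_pow, mul_assoc]
  apply le_antisymm
  · -- hard direction
    intro f hf
    rw [Ideal.mem_inf] at hf
    obtain ⟨hf1, hf2⟩ := hf
    rw [hP, Ideal.mem_span_singleton_mul] at hf1
    obtain ⟨g, hg, hfg⟩ := hf1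
    -- f is divisible by x^(s+1)
    have hfd : f ∈ Ideal.span {x ^ (s + 1)} := by
      have h1 : (Sx * K) ^ (s + 1) *
          (J + Sx * K) ^ (t' + 1 - 1) ≤ Ideal.span {x ^ (s + 1)} := by
        calc (Sx * K) ^ (s + 1) * (J + Sx * K) ^ (t' + 1 - 1)
            ≤ (Sx * K) ^ (s + 1) := Ideal.mul_le_left
          _ = Sx ^ (s + 1) * K ^ (s + 1) := mul_pow _ _ _
          _ ≤ Sx ^ (s + 1) := Ideal.mul_le_left
          _ = Ideal.span {x ^ (s + 1)} := Ideal.span_singleton_pow _ _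
      exact h1 hf2
    rw [Ideal.mem_span_singleton] at hfd
    have hxne : (x : MvPolynomial (Fin (n + 1)) k) ≠ 0 := X_ne_zero _
    have hxsne : x ^ s ≠ 0 := pow_ne_zero _ hxne
    have hdvd : x ∣ g := by
      have : x ^ s * x ∣ x ^ s * g := by
        rw [← pow_succ, hfg]; exact hfd
      exact (mul_dvd_mul_iff_left hxsne).mp this
    obtain ⟨h, rfl⟩ := hdvd
    have hh : h ∈ K ^ s * J ^ (t' + 1) := by
      rw [hM] at hg ⊢
      exact span_mono_colon_aux _ (Fin.last n) hGM h hg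
    have : f = x * (x ^ s * h) := by rw [← hfg]; ring
    rw [this, hP]
    exact Ideal.mul_mem_mul (Ideal.subset_span rfl)
      (Ideal.mem_span_singleton_mul.mpr ⟨h, hh, rfl⟩)
  · -- easy direction
    refine le_inf Ideal.mul_le_right ?_
    have e1 : Sx * ((Sx * K) ^ s * J ^ (t' + 1)) =
        (Sx * K) ^ s * ((Sx * J) * J ^ t') := by ring
    have e2 : (Sx * K) ^ (s + 1) * (J + Sx * K) ^ (t' + 1 - 1) =
        (Sx * K) ^ s * ((Sx * K) * (J + Sx * K) ^ t') := by
      rw [Nat.add_sub_cancel]; ring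
    rw [e1, e2]
    refine Ideal.mul_mono_right (Ideal.mul_mono ?_ ?_)
    · exact Ideal.mul_mono_right hJK
    · exact Ideal.pow_right_mono le_sup_left t'
end

section
/- Let n ≥ 3 and s,t ≥ 0 be integers. In S_n, with f_1 = x_1⋯x_{n−2} and f_2 = x_2⋯x_{n−1}, define ideals K_d for 0 ≤ d ≤ s+t by K_d = (f_1^{s−d})·(f_1,f_2)^t if 0 ≤ d ≤ s, and K_d = (f_1,f_2)^{s+t−d} if s ≤ d ≤ s+t (the two descriptions agree at d = s). Then J_n^s I_n^t = Σ_{d=0}^{s+t} x_n^d · K_d · J_{n−1}^d, where J_{n−1} is regarded as an ideal of S_n via the inclusion S_{n−1} ⊂ S_n. -/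
open MvPolynomial CategoryTheory

universe u

/-- The product of the `m` cyclically consecutive variables (in the cycle on the first `c`
variables, taken modulo `c`) starting at position `j`, inside `k[x_0,…,x_{n-1}]`
(variables indexed by `ZMod n`). -/
noncomputable def pgen (k : Type u) [Field k] (n c m j : ℕ) : MvPolynomial (ZMod n) k :=
  ∏ l ∈ Finset.range m, X (((j + l) % c : ℕ) : ZMod n)

/-- The ideal of `k[x_0,…,x_{n-1}]` generated by the `c` products of `m` cyclically
consecutive variables in the cycle on the first `c` variables. -/
noncomputable def pathI (k : Type u) [Field k] (n c m : ℕ) : Ideal (MvPolynomial (ZMod n) k) :=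
  Ideal.span {g | ∃ j < c, g = pgen k n c m j}

/-- Same as `pathI` but with the generator starting at position `1` (the second one) omitted. -/
noncomputable def pathJ (k : Type u) [Field k] (n c m : ℕ) : Ideal (MvPolynomial (ZMod n) k) :=
  Ideal.span {g | ∃ j < c, j ≠ 1 ∧ g = pgen k n c m j}

/-- `β_i(M) = dim_k Tor_i^S(k, M)` where `S = k[x_0,…,x_{n-1}]` and `k = S/(x_0,…,x_{n-1})`,
computed as the length (= Krull dimension of the submodule lattice) of the `S`-module
`Tor_i^S(k, M)`, which is a `k`-vector space. -/
noncomputable def bettiNumber (k : Type u) [Field k] (n : ℕ) (M : Type u) [AddCommGroup M]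
    [Module (MvPolynomial (ZMod n) k) M] (i : ℕ) : ℕ :=
  letI S := MvPolynomial (ZMod n) k
  letI T := ((Tor (ModuleCat.{u} S) i).obj
      (ModuleCat.of S (S ⧸ (Ideal.span (Set.range (X : ZMod n → S)))))).obj (ModuleCat.of S M)
  ((Order.krullDim (Submodule S T)).unbotD 0).toNat

/-- The `i`-th Betti number of an ideal of `k[x_0,…,x_{n-1}]`, viewed as a module. -/
noncomputable def bettiI (k : Type u) [Field k] (n : ℕ) (I : Ideal (MvPolynomial (ZMod n) k))
    (i : ℕ) : ℕ := bettiNumber k n I i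

/-- The projective dimension `pd(M) = sup { i : β_i(M) ≠ 0 }`. -/
noncomputable def projDimI (k : Type u) [Field k] (n : ℕ)
    (I : Ideal (MvPolynomial (ZMod n) k)) : ℕ∞ :=
  sSup {e : ℕ∞ | ∃ i : ℕ, bettiI k n I i ≠ 0 ∧ e = (i : ℕ∞)}

/-- Binomial coefficient with integer arguments: `0` unless `0 ≤ b ≤ a`. -/
def chooseZ (a b : ℤ) : ℕ := if 0 ≤ b ∧ b ≤ a then a.toNat.choose b.toNat else 0

/-- `f_1 = x_1⋯x_{n-2}`, the first generator of the `(n-2)`-path ideal of the `n`-cycle. -/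
noncomputable def fgen (k : Type u) [Field k] (n : ℕ) (j : ℕ) : MvPolynomial (ZMod n) k :=
  pgen k n n (n - 2) j

/-- The last variable `x_n` of `S_n = k[x_1,…,x_n]`. -/
noncomputable def xlast (k : Type u) [Field k] (n : ℕ) : MvPolynomial (ZMod n) k :=
  X (((n - 1 : ℕ) : ZMod n))

/-- `I_n`, the `(n-2)`-path ideal of the `n`-cycle. -/
noncomputable def Ipath (k : Type u) [Field k] (n : ℕ) : Ideal (MvPolynomial (ZMod n) k) :=
  pathI k n n (n - 2)

/-- `J_n`, the ideal `I_n` with the generator `f_2` omitted. -/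
noncomputable def Jpath (k : Type u) [Field k] (n : ℕ) : Ideal (MvPolynomial (ZMod n) k) :=
  pathJ k n n (n - 2)

/-- `J_{n-1}`, regarded as an ideal of `S_n` via `S_{n-1} ⊂ S_n`: the ideal generated by the
products of `n-3` cyclically consecutive variables in the `(n-1)`-cycle on the first `n-1`
variables, omitting the generator starting at the second position. -/
noncomputable def Jprev (k : Type u) [Field k] (n : ℕ) : Ideal (MvPolynomial (ZMod n) k) :=
  pathJ k n (n - 1) (n - 3)

/-- The ideal `K_d`: `(f_1^{s-d})·(f_1,f_2)^t` for `0 ≤ d ≤ s`, and `(f_1,f_2)^{s+t-d}` for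
`s ≤ d ≤ s+t` (the two descriptions agree at `d = s`). -/
noncomputable def Kd (k : Type u) [Field k] (n s t d : ℕ) : Ideal (MvPolynomial (ZMod n) k) :=
  if d ≤ s then
    Ideal.span {(fgen k n 0) ^ (s - d)} * (Ideal.span {fgen k n 0, fgen k n 1}) ^ t
  else (Ideal.span {fgen k n 0, fgen k n 1}) ^ (s + t - d)

open Pointwise

lemma mod2 (a m : ℕ) (h1 : m ≤ a) (h2 : a < 2*m) : a % m = a - m := by
  rw [Nat.mod_eq_sub_mod h1, Nat.mod_eq_of_lt (by omega)]

lemma pgen_factor (k : Type u) [Field k] (n j : ℕ) (hn : 3 ≤ n) (hj2 : 2 ≤ j)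
    (hjn : j ≤ n - 1) :
    pgen k n n (n-2) j = X (((n-1:ℕ) : ZMod n)) * pgen k n (n-1) (n-3) (j % (n-1)) := by
  have hl0 : n - 1 - j ∈ Finset.range (n-2) := by simp; omega
  rw [pgen, ← Finset.mul_prod_erase _ _ hl0]
  have h1 : (j + (n - 1 - j)) % n = n - 1 := by
    have : j + (n - 1 - j) = n - 1 := by omega
    rw [this, Nat.mod_eq_of_lt (by omega)]
  rw [h1, pgen]
  congr 1
  refine Finset.prod_nbij' (fun l => if l < n - 1 - j then l else l - 1)
    (fun l => if l < n - 1 - j then l else l + 1) ?_ ?_ ?_ ?_ ?_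
  · intro a ha
    simp only [Finset.mem_erase, Finset.mem_range] at ha ⊢
    split <;> omega
  · intro a ha
    simp only [Finset.mem_erase, Finset.mem_range] at ha ⊢
    split <;> omega
  · intro a ha
    simp only [Finset.mem_erase, Finset.mem_range] at ha
    split <;> (try split) <;> omega
  · intro a ha
    simp only [Finset.mem_range] at ha
    split <;> (try split) <;> omega
  · intro l hl
    simp only [Finset.mem_erase, Finset.mem_range] at hl
    congr 1
    congr 1
    by_cases hc : l < n - 1 - j
    · rw [if_pos hc]
      have hjq : j % (n-1) = j := Nat.mod_eq_of_lt (by omega)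
      rw [hjq, Nat.mod_eq_of_lt (by omega), Nat.mod_eq_of_lt (by omega)]
    · rw [if_neg hc]
      have hln : n ≤ j + l := by omega
      rw [mod2 _ _ hln (by omega)]
      by_cases hj : j ≤ n - 2
      · have hjq : j % (n-1) = j := Nat.mod_eq_of_lt (by omega)
        rw [hjq, mod2 _ _ (by omega) (by omega)]
        omega
      · have hj' : j = n - 1 := by omega
        rw [hj', Nat.mod_self, Nat.mod_eq_of_lt (by omega)]
        omega

section setdecomp
variable (k : Type u) [Field k] (n : ℕ) (hn : 3 ≤ n)

lemma mod_mem_aux {j : ℕ} (hj2 : 2 ≤ j) (hjn : j < n) :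
    j % (n-1) < n - 1 ∧ j % (n-1) ≠ 1 := by
  by_cases hj : j ≤ n - 2
  · rw [Nat.mod_eq_of_lt (by omega)]; omega
  · have : j = n - 1 := by omega
    rw [this, Nat.mod_self]; omega

include hn in
lemma setI_eq : {g | ∃ j < n, g = pgen k n n (n-2) j}
    = ({fgen k n 0, fgen k n 1} : Set (MvPolynomial (ZMod n) k))
      ∪ ({xlast k n} : Set (MvPolynomial (ZMod n) k))
        * {g | ∃ j < n - 1, j ≠ 1 ∧ g = pgen k n (n-1) (n-3) j} := by
  ext g
  constructor
  · rintro ⟨j, hj, rfl⟩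
    rcases Nat.lt_or_ge j 2 with hj2 | hj2
    · left
      interval_cases j
      · left; rfl
      · right; rfl
    · right
      obtain ⟨h1, h2⟩ := mod_mem_aux n hj2 hj
      rw [pgen_factor k n j hn hj2 (by omega)]
      exact Set.mul_mem_mul rfl ⟨j % (n-1), h1, h2, rfl⟩
  · rintro (h | h)
    · rcases h with h | h
      · exact ⟨0, by omega, h⟩
      · exact ⟨1, by omega, h⟩
    · rw [Set.mem_mul] at h
      obtain ⟨a, ha, b, ⟨j', hj', hj'1, rfl⟩, rfl⟩ := h
      rw [Set.mem_singleton_iff] at ha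
      subst ha
      refine ⟨if j' = 0 then n - 1 else j', by split <;> omega, ?_⟩
      have hmod : (if j' = 0 then n - 1 else j') % (n-1) = j' := by
        split
        · subst ‹j' = 0›; simp [Nat.mod_self]
        · exact Nat.mod_eq_of_lt hj'
      rw [pgen_factor k n _ hn (by split <;> omega) (by split <;> omega), hmod]
      rfl

include hn in
lemma setJ_eq : {g | ∃ j < n, j ≠ 1 ∧ g = pgen k n n (n-2) j}
    = ({fgen k n 0} : Set (MvPolynomial (ZMod n) k))
      ∪ ({xlast k n} : Set (MvPolynomial (ZMod n) k))
        * {g | ∃ j < n - 1, j ≠ 1 ∧ g = pgen k n (n-1) (n-3) j} := by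
  ext g
  constructor
  · rintro ⟨j, hj, hj1, rfl⟩
    rcases Nat.lt_or_ge j 2 with hj2 | hj2
    · left
      interval_cases j
      · rfl
      · omega
    · right
      obtain ⟨h1, h2⟩ := mod_mem_aux n hj2 hj
      rw [pgen_factor k n j hn hj2 (by omega)]
      exact Set.mul_mem_mul rfl ⟨j % (n-1), h1, h2, rfl⟩
  · rintro (h | h)
    · exact ⟨0, by omega, by omega, h⟩
    · rw [Set.mem_mul] at h
      obtain ⟨a, ha, b, ⟨j', hj', hj'1, rfl⟩, rfl⟩ := h
      rw [Set.mem_singleton_iff] at ha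
      subst ha
      refine ⟨if j' = 0 then n - 1 else j', by split <;> omega, by split <;> omega, ?_⟩
      have hmod : (if j' = 0 then n - 1 else j') % (n-1) = j' := by
        split
        · subst ‹j' = 0›; simp [Nat.mod_self]
        · exact Nat.mod_eq_of_lt hj'
      rw [pgen_factor k n _ hn (by split <;> omega) (by split <;> omega), hmod]
      rfl

include hn in
lemma Ipath_eq : Ipath k n
    = Ideal.span {fgen k n 0, fgen k n 1} + Ideal.span {xlast k n} * Jprev k n := by
  rw [Ipath, pathI, setI_eq k n hn, Ideal.span_union, Jprev, pathJ, Ideal.span_mul_span',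
    Submodule.add_eq_sup]

include hn in
lemma Jpath_eq : Jpath k n
    = Ideal.span {fgen k n 0} + Ideal.span {xlast k n} * Jprev k n := by
  rw [Jpath, pathJ, setJ_eq k n hn, Ideal.span_union, Jprev, pathJ, Ideal.span_mul_span',
    Submodule.add_eq_sup]

end setdecomp

section idealalg
variable {R : Type*} [CommSemiring R]

lemma ideal_sum_eq_sup {ι : Type*} (s : Finset ι) (f : ι → Ideal R) :
    ∑ i ∈ s, f i = s.sup f := by
  induction s using Finset.cons_induction with
  | empty => simp [Ideal.zero_eq_bot]
  | cons a s ha ih => rw [Finset.sum_cons, Finset.sup_cons, ih, Submodule.add_eq_sup]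

lemma ideal_sum_le {ι : Type*} {s : Finset ι} {f : ι → Ideal R} {I : Ideal R}
    (h : ∀ i ∈ s, f i ≤ I) : ∑ i ∈ s, f i ≤ I := by
  rw [ideal_sum_eq_sup]; exact Finset.sup_le h

lemma ideal_le_sum {ι : Type*} {s : Finset ι} {f : ι → Ideal R} {i : ι} (hi : i ∈ s) :
    f i ≤ ∑ j ∈ s, f j := by
  rw [ideal_sum_eq_sup]; exact Finset.le_sup hi

lemma ideal_add_pow (A B : Ideal R) (m : ℕ) :
    (A + B) ^ m = ∑ i ∈ Finset.range (m+1), A ^ i * B ^ (m - i) := by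
  refine le_antisymm ?_ (ideal_sum_le fun i hi => ?_)
  · induction m with
    | zero => simp
    | succ m ih =>
      rw [pow_succ]
      calc (A + B) ^ m * (A + B) ≤ (∑ i ∈ Finset.range (m+1), A ^ i * B ^ (m - i)) * (A + B) :=
            Ideal.mul_mono_left ih
        _ = ∑ i ∈ Finset.range (m+1), (A ^ i * B ^ (m - i) * A + A ^ i * B ^ (m - i) * B) := by
            rw [Finset.sum_mul]; exact Finset.sum_congr rfl fun i _ => mul_add _ _ _
        _ ≤ ∑ i ∈ Finset.range (m+2), A ^ i * B ^ (m + 1 - i) := by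
            refine ideal_sum_le fun i hi => ?_
            simp only [Finset.mem_range] at hi
            rw [Submodule.add_eq_sup, sup_le_iff]
            constructor
            · have h1 : A ^ i * B ^ (m - i) * A = A ^ (i+1) * B ^ (m + 1 - (i+1)) := by
                have : m + 1 - (i+1) = m - i := by omega
                rw [this, pow_succ]; ring
              rw [h1]
              exact ideal_le_sum (f := fun j => A ^ j * B ^ (m + 1 - j))
                (Finset.mem_range.mpr (by omega))
            · have h2 : A ^ i * B ^ (m - i) * B = A ^ i * B ^ (m + 1 - i) := by
                have : m + 1 - i = (m - i) + 1 := by omega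
                rw [this, pow_succ]; ring
              rw [h2]
              exact ideal_le_sum (f := fun j => A ^ j * B ^ (m + 1 - j))
                (Finset.mem_range.mpr (by omega))
  · simp only [Finset.mem_range] at hi
    calc A ^ i * B ^ (m - i) ≤ (A + B) ^ i * (A + B) ^ (m - i) :=
          Ideal.mul_mono (Ideal.pow_right_mono (by rw [Submodule.add_eq_sup]; exact le_sup_left) i)
            (Ideal.pow_right_mono (by rw [Submodule.add_eq_sup]; exact le_sup_right) _)
      _ = (A + B) ^ m := by rw [← pow_add]; congr 1; omega

end idealalg


/-- For `n ≥ 3` and `s, t ≥ 0`: `J_n^s I_n^t = Σ_{d=0}^{s+t} x_n^d · K_d · J_{n-1}^d`. -/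
theorem decomposition_JsIt (k : Type u) [Field k] (n : ℕ) (hn : 3 ≤ n) (s t : ℕ) :
    (Jpath k n) ^ s * (Ipath k n) ^ t
      = ∑ d ∈ Finset.range (s + t + 1),
          Ideal.span {(xlast k n) ^ d} * Kd k n s t d * (Jprev k n) ^ d := by
  set F0 := Ideal.span {fgen k n 0} with hF0
  set F := Ideal.span {fgen k n 0, fgen k n 1} with hF
  set Xl := Ideal.span {xlast k n} with hXl
  set J' := Jprev k n with hJ'
  have hF0F : F0 ≤ F := Ideal.span_mono (by simp)
  have hRHS : ∀ d, Ideal.span {(xlast k n) ^ d} * Kd k n s t d * J' ^ d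
      = (Xl ^ d * J' ^ d) * (if d ≤ s then F0 ^ (s - d) * F ^ t else F ^ (s + t - d)) := by
    intro d
    rw [Kd, hXl, Ideal.span_singleton_pow]
    split
    · rw [hF0, Ideal.span_singleton_pow]; ring
    · ring
  rw [Finset.sum_congr rfl fun d _ => hRHS d]
  rw [Jpath_eq k n hn, Ipath_eq k n hn, ideal_add_pow, ideal_add_pow, Finset.sum_mul_sum]
  refine le_antisymm (ideal_sum_le fun a ha => ideal_sum_le fun b hb => ?_)
    (ideal_sum_le fun d hd => ?_)
  · simp only [Finset.mem_range] at ha hb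
    have ha' : a ≤ s := by omega
    have hb' : b ≤ t := by omega
    set d := (s - a) + (t - b) with hd
    have hdmem : d ∈ Finset.range (s + t + 1) := Finset.mem_range.mpr (by omega)
    refine le_trans ?_ (ideal_le_sum hdmem)
    have hrw : F0 ^ a * (Xl * J') ^ (s - a) * (F ^ b * (Xl * J') ^ (t - b))
        = (F0 ^ a * F ^ b) * (Xl ^ d * J' ^ d) := by
      rw [hd]; ring
    rw [hrw]
    rw [mul_comm (Xl ^ d * J' ^ d)]
    refine Ideal.mul_mono_left ?_
    split
    · -- d ≤ s, so t - b ≤ a and s - d = a - (t - b)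
      rename_i hds
      have h1 : a = (s - d) + (t - b) := by omega
      have h2 : (t - b) + b = t := by omega
      calc F0 ^ a * F ^ b = F0 ^ (s - d) * (F0 ^ (t - b) * F ^ b) := by
            rw [h1, pow_add]; ring
        _ ≤ F0 ^ (s - d) * (F ^ (t - b) * F ^ b) :=
            Ideal.mul_mono_right (Ideal.mul_mono_left (Ideal.pow_right_mono hF0F _))
        _ = F0 ^ (s - d) * F ^ t := by rw [← pow_add, h2]
    · rename_i hds
      have h1 : a + b = s + t - d := by omega
      calc F0 ^ a * F ^ b ≤ F ^ a * F ^ b :=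
            Ideal.mul_mono_left (Ideal.pow_right_mono hF0F _)
        _ = F ^ (s + t - d) := by rw [← pow_add, h1]
  · simp only [Finset.mem_range] at hd
    by_cases hds : d ≤ s
    · rw [if_pos hds]
      have hamem : s - d ∈ Finset.range (s + 1) := Finset.mem_range.mpr (by omega)
      have hbmem : t ∈ Finset.range (t + 1) := Finset.mem_range.mpr (by omega)
      have heq : (Xl ^ d * J' ^ d) * (F0 ^ (s - d) * F ^ t)
          = F0 ^ (s - d) * (Xl * J') ^ (s - (s - d)) * (F ^ t * (Xl * J') ^ (t - t)) := by
        have h1 : s - (s - d) = d := by omega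
        have h2 : t - t = 0 := by omega
        rw [h1, h2]; ring
      rw [heq]
      exact le_trans (ideal_le_sum (f := fun j => F0 ^ (s - d) * (Xl * J') ^ (s - (s - d)) * (F ^ j * (Xl * J') ^ (t - j))) hbmem) (ideal_le_sum (f := fun i => ∑ j ∈ Finset.range (t + 1), F0 ^ i * (Xl * J') ^ (s - i) * (F ^ j * (Xl * J') ^ (t - j))) hamem)
    · rw [if_neg hds]
      have hamem : 0 ∈ Finset.range (s + 1) := by simp
      have hbmem : s + t - d ∈ Finset.range (t + 1) := Finset.mem_range.mpr (by omega)
      have heq : (Xl ^ d * J' ^ d) * F ^ (s + t - d)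
          = F0 ^ 0 * (Xl * J') ^ (s - 0) * (F ^ (s + t - d) * (Xl * J') ^ (t - (s + t - d))) := by
        have h1 : t - (s + t - d) = d - s := by omega
        have hXd : Xl ^ d = Xl ^ s * Xl ^ (d - s) := by rw [← pow_add]; congr 1; omega
        have hJd : J' ^ d = J' ^ s * J' ^ (d - s) := by rw [← pow_add]; congr 1; omega
        rw [h1, hXd, hJd]; simp only [Nat.sub_zero]; ring
      rw [heq]
      exact le_trans (ideal_le_sum (f := fun j => F0 ^ 0 * (Xl * J') ^ (s - 0) * (F ^ j * (Xl * J') ^ (t - j))) hbmem) (ideal_le_sum (f := fun i => ∑ j ∈ Finset.range (t + 1), F0 ^ i * (Xl * J') ^ (s - i) * (F ^ j * (Xl * J') ^ (t - j))) hamem)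
end

section
/- Let n ≥ 3 and s,t ≥ 0 be integers. In S_n, with f_1 = x_1⋯x_{n−2} and f_2 = x_2⋯x_{n−1}, define K_d = (f_1^{s−d})·(f_1,f_2)^t for 0 ≤ d ≤ s and K_d = (f_1,f_2)^{s+t−d} for s ≤ d ≤ s+t, and define ideals M_j by downward recursion: M_{s+t} = K_{s+t}·J_{n−1}^{s+t} = J_{n−1}^{s+t} and M_j = K_j·J_{n−1}^j + x_n·M_{j+1} for 0 ≤ j ≤ s+t−1, where J_{n−1} is regarded as an ideal of S_n via the inclusion S_{n−1} ⊂ S_n. Then for all 0 ≤ j ≤ s+t−1, K_j J_{n−1}^j ∩ x_n M_{j+1} = x_n·K_j J_{n−1}^j. -/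
open MvPolynomial CategoryTheory

universe u

section Aux

lemma aux_sat {R : Type u} [CommRing R] (I : Ideal R) (p : Polynomial R)
    (h : (Polynomial.X : Polynomial R) * p ∈ Ideal.map (Polynomial.C : R →+* Polynomial R) I) :
    p ∈ Ideal.map (Polynomial.C : R →+* Polynomial R) I := by
  rw [Ideal.mem_map_C_iff] at h ⊢
  intro m
  simpa [Polynomial.coeff_X_mul] using h (m + 1)

variable (k : Type u) [Field k] (n : ℕ)

/-- The distinguished variable index. -/
def vvar : ZMod n := ((n - 1 : ℕ) : ZMod n)

/-- The isomorphism `k[x_i : i ∈ ZMod n] ≃ k[x_i : i ≠ v][y]`. -/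
noncomputable def ee : MvPolynomial (ZMod n) k ≃ₐ[k]
    Polynomial (MvPolynomial {i : ZMod n // i ≠ vvar n} k) :=
  (MvPolynomial.renameEquiv k (Equiv.optionSubtypeNe (vvar n)).symm).trans
    (MvPolynomial.optionEquivLeft k _)

lemma ee_X_of_ne {i : ZMod n} (h : i ≠ vvar n) :
    ee k n (X i) = Polynomial.C (X (⟨i, h⟩ : {i : ZMod n // i ≠ vvar n})) := by
  simp [ee, Equiv.optionSubtypeNe_symm_of_ne h, MvPolynomial.optionEquivLeft_X_some]

lemma ee_X_v : ee k n (X (vvar n)) = Polynomial.X := by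
  simp [ee, Equiv.optionSubtypeNe_symm_self, MvPolynomial.optionEquivLeft_X_none]

/-- The ring hom underlying `ee`. -/
noncomputable def eh : MvPolynomial (ZMod n) k →+*
    Polynomial (MvPolynomial {i : ZMod n // i ≠ vvar n} k) :=
  (ee k n).toAlgHom.toRingHom

lemma eh_apply (p : MvPolynomial (ZMod n) k) : eh k n p = ee k n p := rfl

lemma eh_coe : ⇑(eh k n) = ⇑(ee k n) := rfl

/-- A polynomial not involving the variable `v`. -/
def GoodP (g : MvPolynomial (ZMod n) k) : Prop := ∃ q, ee k n g = Polynomial.C q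

/-- An ideal extended from the subring of polynomials not involving `v`. -/
def GoodI (I : Ideal (MvPolynomial (ZMod n) k)) : Prop :=
  ∃ I₀, Ideal.map (eh k n) I = Ideal.map Polynomial.C I₀

lemma GoodP.mul {a b : MvPolynomial (ZMod n) k} (ha : GoodP k n a) (hb : GoodP k n b) :
    GoodP k n (a * b) := by
  obtain ⟨q, hq⟩ := ha; obtain ⟨r, hr⟩ := hb
  exact ⟨q * r, by rw [map_mul, hq, hr, map_mul]⟩

lemma GoodP.one : GoodP k n 1 := ⟨1, by simp⟩

lemma GoodP.pow {a : MvPolynomial (ZMod n) k} (ha : GoodP k n a) (m : ℕ) :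
    GoodP k n (a ^ m) := by
  obtain ⟨q, hq⟩ := ha
  exact ⟨q ^ m, by rw [map_pow, hq, ← map_pow]⟩

lemma goodP_pgen (hn : 3 ≤ n) (c m j : ℕ)
    (h : ∀ l < m, (j + l) % c < n ∧ (j + l) % c ≠ n - 1) :
    GoodP k n (pgen k n c m j) := by
  unfold pgen
  refine Finset.prod_induction _ _ (fun a b => GoodP.mul k n) (GoodP.one k n) ?_
  intro l hl
  simp only [Finset.mem_range] at hl
  obtain ⟨h1, h2⟩ := h l hl
  have hne : (((j + l) % c : ℕ) : ZMod n) ≠ vvar n := by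
    haveI : NeZero n := ⟨by omega⟩
    intro he
    apply h2
    have := congrArg ZMod.val he
    rwa [ZMod.val_natCast_of_lt h1, vvar, ZMod.val_natCast_of_lt (by omega)] at this
  exact ⟨_, ee_X_of_ne k n hne⟩

lemma goodI_span (S : Set (MvPolynomial (ZMod n) k)) (h : ∀ g ∈ S, GoodP k n g) :
    GoodI k n (Ideal.span S) := by
  refine ⟨Ideal.span {q | Polynomial.C q ∈ (eh k n) '' S}, ?_⟩
  rw [Ideal.map_span, Ideal.map_span]
  congr 1
  ext p
  constructor
  · rintro ⟨g, hg, rfl⟩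
    obtain ⟨q, hq⟩ := h g hg
    have hq' : eh k n g = Polynomial.C q := hq
    refine ⟨q, ?_, hq'.symm⟩
    exact Set.mem_setOf_eq ▸ ⟨g, hg, hq'⟩
  · rintro ⟨q, hq, rfl⟩
    exact hq

lemma goodI_mul {I J : Ideal (MvPolynomial (ZMod n) k)} (hI : GoodI k n I) (hJ : GoodI k n J) :
    GoodI k n (I * J) := by
  obtain ⟨I₀, hI₀⟩ := hI; obtain ⟨J₀, hJ₀⟩ := hJ
  exact ⟨I₀ * J₀, by rw [Ideal.map_mul, hI₀, hJ₀, Ideal.map_mul]⟩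

lemma goodI_pow {I : Ideal (MvPolynomial (ZMod n) k)} (hI : GoodI k n I) (m : ℕ) :
    GoodI k n (I ^ m) := by
  obtain ⟨I₀, hI₀⟩ := hI
  exact ⟨I₀ ^ m, by rw [Ideal.map_pow, hI₀, ← Ideal.map_pow]⟩

lemma goodI_sat {I : Ideal (MvPolynomial (ZMod n) k)} (hI : GoodI k n I)
    {p : MvPolynomial (ZMod n) k} (hp : xlast k n * p ∈ I) : p ∈ I := by
  obtain ⟨I₀, hmap⟩ := hI
  have hx : xlast k n = X (vvar n) := rfl
  have h1 : eh k n (xlast k n * p) ∈ Ideal.map (eh k n) I := Ideal.mem_map_of_mem _ hp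
  rw [hmap, map_mul, eh_apply, hx, ee_X_v] at h1
  have h2 := aux_sat I₀ (eh k n p) h1
  rw [← hmap, Ideal.mem_map_iff_of_surjective (eh k n)
    (show Function.Surjective (eh k n) from (ee k n).surjective)] at h2
  obtain ⟨q, hqI, hqe⟩ := h2
  have : q = p := (ee k n).injective hqe
  exact this ▸ hqI

lemma goodP_f1 (hn : 3 ≤ n) : GoodP k n (fgen k n 0) := by
  apply goodP_pgen k n hn
  intro l hl
  have : (0 + l) % n = 0 + l := Nat.mod_eq_of_lt (by omega)
  omega

lemma goodP_f2 (hn : 3 ≤ n) : GoodP k n (fgen k n 1) := by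
  apply goodP_pgen k n hn
  intro l hl
  have : (1 + l) % n = 1 + l := Nat.mod_eq_of_lt (by omega)
  omega

lemma goodP_Jgen (hn : 3 ≤ n) (j : ℕ) : GoodP k n (pgen k n (n - 1) (n - 3) j) := by
  apply goodP_pgen k n hn
  intro l hl
  have := Nat.mod_lt (j + l) (show 0 < n - 1 by omega)
  omega

lemma goodI_F (hn : 3 ≤ n) : GoodI k n (Ideal.span {fgen k n 0, fgen k n 1}) := by
  apply goodI_span
  intro g hg
  simp only [Set.mem_insert_iff, Set.mem_singleton_iff] at hg
  rcases hg with rfl | rfl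
  · exact goodP_f1 k n hn
  · exact goodP_f2 k n hn

lemma goodI_KJ (hn : 3 ≤ n) (s t d j : ℕ) :
    GoodI k n (Kd k n s t d * Jprev k n ^ j) := by
  apply goodI_mul
  · unfold Kd
    split_ifs
    · apply goodI_mul
      · apply goodI_span
        intro g hg
        simp only [Set.mem_singleton_iff] at hg
        subst hg
        exact GoodP.pow k n (goodP_f1 k n hn) _
      · exact goodI_pow k n (goodI_F k n hn) t
    · exact goodI_pow k n (goodI_F k n hn) _
  · apply goodI_pow
    apply goodI_span
    rintro g ⟨j', _, _, rfl⟩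
    exact goodP_Jgen k n hn j'

lemma f1_mem_J (hn : 3 ≤ n) : fgen k n 0 ∈ Jprev k n := by
  have hgen : pgen k n (n - 1) (n - 3) 0 ∈ Jprev k n :=
    Ideal.subset_span ⟨0, by omega, by omega, rfl⟩
  have heq : fgen k n 0 = pgen k n (n - 1) (n - 3) 0 * X (((n - 3 : ℕ)) : ZMod n) := by
    unfold fgen pgen
    rw [show n - 2 = (n - 3) + 1 from by omega, Finset.prod_range_succ]
    congr 1
    · refine Finset.prod_congr rfl fun l hl => ?_
      simp only [Finset.mem_range] at hl
      rw [Nat.mod_eq_of_lt (by omega), Nat.mod_eq_of_lt (by omega)]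
    · have : (0 + (n - 3)) % n = n - 3 := by
        rw [Nat.mod_eq_of_lt (by omega)]
        omega
      rw [this]
  rw [heq]
  exact Ideal.mul_mem_right _ _ hgen

lemma f2_mem_J (hn : 3 ≤ n) : fgen k n 1 ∈ Jprev k n := by
  rcases eq_or_lt_of_le hn with h3 | h4
  · have hone : pgen k n (n - 1) (n - 3) 0 = 1 := by
      unfold pgen
      rw [show n - 3 = 0 from by omega, Finset.prod_range_zero]
    have htop : Jprev k n = ⊤ := by
      rw [Ideal.eq_top_iff_one]
      exact hone ▸ Ideal.subset_span ⟨0, by omega, by omega, rfl⟩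
    rw [htop]
    trivial
  · have hgen : pgen k n (n - 1) (n - 3) 2 ∈ Jprev k n :=
      Ideal.subset_span ⟨2, by omega, by omega, rfl⟩
    have heq : fgen k n 1 = pgen k n (n - 1) (n - 3) 2 * X ((1 : ℕ) : ZMod n) := by
      unfold fgen pgen
      rw [show n - 2 = (n - 3) + 1 from by omega, Finset.prod_range_succ']
      congr 1
      · refine Finset.prod_congr rfl fun l hl => ?_
        simp only [Finset.mem_range] at hl
        have h1 : (1 + (l + 1)) % n = (2 + l) % (n - 1) := by
          rw [Nat.mod_eq_of_lt (by omega), Nat.mod_eq_of_lt (by omega)]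
          omega
        rw [h1]
      · have : (1 + 0) % n = 1 := Nat.mod_eq_of_lt (by omega)
        rw [this]
    rw [heq]
    exact Ideal.mul_mem_right _ _ hgen

lemma F_le_J (hn : 3 ≤ n) : Ideal.span {fgen k n 0, fgen k n 1} ≤ Jprev k n := by
  rw [Ideal.span_le]
  intro g hg
  simp only [Set.mem_insert_iff, Set.mem_singleton_iff] at hg
  rcases hg with rfl | rfl
  · exact f1_mem_J k n hn
  · exact f2_mem_J k n hn

lemma f1span_le_J (hn : 3 ≤ n) : Ideal.span {fgen k n 0} ≤ Jprev k n := by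
  rw [Ideal.span_le]
  intro g hg
  simp only [Set.mem_singleton_iff] at hg
  subst hg
  exact f1_mem_J k n hn

lemma Kd_step (hn : 3 ≤ n) (s t j : ℕ) (hj : j < s + t) :
    Kd k n s t j ≤ Kd k n s t (j + 1) * Jprev k n := by
  unfold Kd
  split_ifs with h1 h2 h2
  · -- j ≤ s, j+1 ≤ s
    calc Ideal.span {fgen k n 0 ^ (s - j)} * Ideal.span {fgen k n 0, fgen k n 1} ^ t
        = (Ideal.span {fgen k n 0 ^ (s - (j + 1))} * Ideal.span {fgen k n 0}) *
            Ideal.span {fgen k n 0, fgen k n 1} ^ t := by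
          rw [Ideal.span_singleton_mul_span_singleton, ← pow_succ,
            show s - (j + 1) + 1 = s - j from by omega]
      _ = (Ideal.span {fgen k n 0 ^ (s - (j + 1))} *
            Ideal.span {fgen k n 0, fgen k n 1} ^ t) * Ideal.span {fgen k n 0} :=
          mul_right_comm _ _ _
      _ ≤ _ := Ideal.mul_mono_right (f1span_le_J k n hn)
  · -- j ≤ s, ¬ j+1 ≤ s, so j = s
    rw [show s - j = 0 from by omega, pow_zero, Ideal.span_singleton_one, Ideal.top_mul]
    calc Ideal.span {fgen k n 0, fgen k n 1} ^ t
        = Ideal.span {fgen k n 0, fgen k n 1} ^ (s + t - (j + 1)) *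
            Ideal.span {fgen k n 0, fgen k n 1} := by
          rw [← pow_succ]
          congr 1
          omega
      _ ≤ _ := Ideal.mul_mono_right (F_le_J k n hn)
  · omega
  · rw [show s + t - j = (s + t - (j + 1)) + 1 from by omega, pow_succ]
    exact Ideal.mul_mono_right (F_le_J k n hn)

lemma KJ_step (hn : 3 ≤ n) (s t j : ℕ) (hj : j < s + t) :
    Kd k n s t j * Jprev k n ^ j ≤ Kd k n s t (j + 1) * Jprev k n ^ (j + 1) := by
  calc Kd k n s t j * Jprev k n ^ j
      ≤ (Kd k n s t (j + 1) * Jprev k n) * Jprev k n ^ j :=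
        Ideal.mul_mono_left (Kd_step k n hn s t j hj)
    _ = Kd k n s t (j + 1) * Jprev k n ^ (j + 1) := by
        rw [mul_assoc, ← pow_succ']

end Aux

/-- For `n ≥ 3`, `s, t ≥ 0`, and ideals `M_j` defined by the downward recursion
`M_{s+t} = K_{s+t}·J_{n-1}^{s+t}` and `M_j = K_j·J_{n-1}^j + x_n·M_{j+1}` for `0 ≤ j ≤ s+t-1`:
for all `0 ≤ j ≤ s+t-1`, `K_j J_{n-1}^j ∩ x_n M_{j+1} = x_n·K_j J_{n-1}^j`. -/
theorem intersection_Mj (k : Type u) [Field k] (n : ℕ) (hn : 3 ≤ n) (s t : ℕ)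
    (M : ℕ → Ideal (MvPolynomial (ZMod n) k))
    (hMtop : M (s + t) = Kd k n s t (s + t) * (Jprev k n) ^ (s + t))
    (hMrec : ∀ j < s + t,
      M j = Kd k n s t j * (Jprev k n) ^ j + Ideal.span {xlast k n} * M (j + 1)) :
    ∀ j < s + t,
      (Kd k n s t j * (Jprev k n) ^ j) ⊓ (Ideal.span {xlast k n} * M (j + 1))
        = Ideal.span {xlast k n} * (Kd k n s t j * (Jprev k n) ^ j) := by
  intro j hj
  have hKM : Kd k n s t j * Jprev k n ^ j ≤ M (j + 1) := by
    rcases eq_or_lt_of_le (Nat.succ_le_of_lt hj) with he | hlt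
    · have h := hMtop
      rw [← he] at h
      rw [h]
      exact KJ_step k n hn s t j hj
    · rw [hMrec (j + 1) hlt]
      exact le_trans (KJ_step k n hn s t j hj) le_sup_left
  apply le_antisymm
  · intro p hp
    obtain ⟨hpK, hpx2⟩ := Submodule.mem_inf.mp hp
    have hx : p ∈ Ideal.span {xlast k n} := Ideal.mul_le_left hpx2
    obtain ⟨c, rfl⟩ := Ideal.mem_span_singleton'.mp hx
    have hc : c ∈ Kd k n s t j * Jprev k n ^ j := by
      refine goodI_sat k n (goodI_KJ k n hn s t j j) ?_
      rwa [mul_comm c (xlast k n)] at hpK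
    rw [mul_comm c (xlast k n)]
    exact Ideal.mul_mem_mul (Ideal.mem_span_singleton_self _) hc
  · refine le_inf ?_ ?_
    · exact Ideal.mul_le_right
    · exact Ideal.mul_mono_right hKM
end

section
/- For all integers n ≥ 4, s ≥ 0, t ≥ 2 and i ≥ 0: if s ≤ t then p(n,s,t,i) − p(n,s+1,t−1,i) = Σ_{ℓ=0}^{s} p̿(n−2,0,ℓ,i); and if s ≥ t then p(n,s,t,i) − p(n,s+1,t−1,i) = Σ_{ℓ=0}^{t−1} p̿(n−2,0,ℓ,i) + (s−t+1)·p̿(n−2,0,t,i) + Σ_{ℓ=1}^{s−t} (s−t+1−ℓ)·[p̿(n−2,ℓ,t,i) − p̿(n−2,ℓ,t−1,i)], where p̿(n,s,t,i) = p(n,s,t,i) + 2·p(n,s,t,i−1) + p(n,s,t,i−2). -/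
/-- The positive part `p⁺(n,s,t,i) = Σ_{j=0}^{⌊i/2⌋} C(n, i-2j)·[C(n+s+t-1-i+j, n-1) -
C(n+s-1-i+j, n-1)]`. -/
def pPlus (n s t i : ℕ) : ℤ :=
  ∑ j ∈ Finset.range (i / 2 + 1),
    (chooseZ (n : ℤ) ((i : ℤ) - 2 * j) : ℤ) *
      ((chooseZ ((n : ℤ) + s + t - 1 - i + j) ((n : ℤ) - 1) : ℤ)
        - (chooseZ ((n : ℤ) + s - 1 - i + j) ((n : ℤ) - 1) : ℤ))

/-- The negative part `p⁻(n,s,t,i)`, with `κ = ⌊n/2⌋`: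
`Σ_{j=0}^{⌊(i-1)/2⌋} C(n, i-1-2j)·[C(s+t+κ-1-j, n-1) - C(s+κ-1-j, n-1)]` for `n` odd, and
`Σ_{j=0}^{⌊i/2⌋} C(n, i-2j)·[C(s+t+κ-1-j, n-1) - C(s+κ-1-j, n-1)]` for `n` even. -/
def pMinus (n s t i : ℕ) : ℤ :=
  if Odd n then
    ∑ j ∈ Finset.range ((i + 1) / 2),
      (chooseZ (n : ℤ) ((i : ℤ) - 1 - 2 * j) : ℤ) *
        ((chooseZ ((s : ℤ) + t + (n / 2 : ℕ) - 1 - j) ((n : ℤ) - 1) : ℤ)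
          - (chooseZ ((s : ℤ) + (n / 2 : ℕ) - 1 - j) ((n : ℤ) - 1) : ℤ))
  else
    ∑ j ∈ Finset.range (i / 2 + 1),
      (chooseZ (n : ℤ) ((i : ℤ) - 2 * j) : ℤ) *
        ((chooseZ ((s : ℤ) + t + (n / 2 : ℕ) - 1 - j) ((n : ℤ) - 1) : ℤ)
          - (chooseZ ((s : ℤ) + (n / 2 : ℕ) - 1 - j) ((n : ℤ) - 1) : ℤ))

/-- The constant part `p^c(n,s,t,i) = C(n-2, i)·C(n+s-i-2, n-2)`. -/
def pConst (n s t i : ℕ) : ℤ :=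
  (chooseZ ((n : ℤ) - 2) (i : ℤ) : ℤ) * (chooseZ ((n : ℤ) + s - i - 2) ((n : ℤ) - 2) : ℤ)

/-- `p(n,s,t,i) = p⁺(n,s,t,i) - p⁻(n,s,t,i) + p^c(n,s,t,i)`, with `p(n,s,t,i) = 0` for
`i < 0`. -/
def pFun (n s t : ℕ) (i : ℤ) : ℤ :=
  if 0 ≤ i then pPlus n s t i.toNat - pMinus n s t i.toNat + pConst n s t i.toNat else 0

/-- `p̿(n,s,t,i) = p(n,s,t,i) + 2·p(n,s,t,i-1) + p(n,s,t,i-2)`. -/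
def pFunpp (n s t : ℕ) (i : ℤ) : ℤ :=
  pFun n s t i + 2 * pFun n s t (i - 1) + pFun n s t (i - 2)

/-!
Write `p(n,s,t,i) = Φₙ(s+t,i) - Φₙ(s,i) + cₙ(s,i)`, where `Φₙ(x,i)` (`pPrimitive`) is
`p⁺ - p⁻` with each bracket replaced by its first term, `x` in place of `s + t`, and
`cₙ(x,i) = C(n-2,i)·C(n+x-i-2,n-2)` (`pConstInt`). With `Gₙ = Φₙ - cₙ` (`pPotential`), the
left-hand side is the first difference `Gₙ(s+1,i) - Gₙ(s,i)`, whatever `t ≥ 1` is.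

The sums defining `Φₙ` have the shape `Σⱼ C(n,i-2j)·g(j)`, so Vandermonde's
`C(n,k) = C(n-2,k) + 2C(n-2,k-1) + C(n-2,k-2)` shows that `p̿(n-2,0,ℓ,i)` is the second
difference `Gₙ(ℓ+1,i) - 2Gₙ(ℓ,i) + Gₙ(ℓ-1,i)`: in the `p⁺` part the summand also depends on
`i`, and the resulting index shift produces exactly the second difference of `cₙ`. As `Gₙ`
vanishes at `x = 0` and `x = -1`, summing over `ℓ ≤ s` telescopes to the first identity. The
second one follows by summation by parts, because `p(n,a,b,i) - p(n,a,b-1,i)` only depends on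
`a + b`.
-/

open Finset

theorem chooseZ_of_neg {a b : ℤ} (hb : b < 0) : chooseZ a b = 0 := by
  simp only [chooseZ]; rw [if_neg (by omega)]

theorem chooseZ_of_lt {a b : ℤ} (h : a < b) : chooseZ a b = 0 := by
  simp only [chooseZ]; rw [if_neg (by omega)]

theorem chooseZ_self {a : ℤ} (ha : 0 ≤ a) : chooseZ a a = 1 := by
  simp [chooseZ, ha]

theorem chooseZ_zero_right {a : ℤ} (ha : 0 ≤ a) : chooseZ a 0 = 1 := by
  simp [chooseZ, ha]

theorem chooseZ_succ_succ (a : ℤ) {b : ℤ} (hb : 0 ≤ b) :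
    (chooseZ (a + 1) (b + 1) : ℤ) = chooseZ a b + chooseZ a (b + 1) := by
  norm_cast
  rcases lt_or_ge a b with hab | hab
  · rw [chooseZ_of_lt (by omega), chooseZ_of_lt hab, chooseZ_of_lt (by omega)]
  · obtain ⟨a, rfl⟩ := Int.eq_ofNat_of_zero_le (hb.trans hab)
    obtain ⟨b, rfl⟩ := Int.eq_ofNat_of_zero_le hb
    have hab' : b ≤ a := by omega
    simp only [chooseZ, ← Nat.cast_add_one, Int.toNat_natCast, Nat.cast_le, Nat.cast_nonneg,
      true_and, Nat.choose_succ_succ', if_pos hab', if_pos (Nat.succ_le_succ hab')]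
    split_ifs
    · rfl
    · rw [Nat.choose_eq_zero_of_lt (show a < b + 1 by omega)]

theorem chooseZ_add_one_left {a : ℤ} (ha : 0 ≤ a) (b : ℤ) :
    (chooseZ (a + 1) b : ℤ) = chooseZ a b + chooseZ a (b - 1) := by
  rcases lt_trichotomy b 0 with hb | rfl | hb
  · simp [chooseZ_of_neg hb, chooseZ_of_neg (show b - 1 < 0 by omega)]
  · simp [chooseZ_zero_right ha, chooseZ_zero_right (show 0 ≤ a + 1 by omega),
      chooseZ_of_neg (show (-1 : ℤ) < 0 by omega)]
  · have h := chooseZ_succ_succ a (show 0 ≤ b - 1 by omega)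
    rw [sub_add_cancel] at h
    rw [h]; ring

theorem chooseZ_add_two_left {a : ℤ} (ha : 0 ≤ a) (b : ℤ) :
    (chooseZ (a + 2) b : ℤ) = chooseZ a b + 2 * chooseZ a (b - 1) + chooseZ a (b - 2) := by
  have h₁ := chooseZ_add_one_left (show 0 ≤ a + 1 by omega) b
  rw [add_assoc, one_add_one_eq_two] at h₁
  rw [h₁, chooseZ_add_one_left ha, chooseZ_add_one_left ha, sub_sub, one_add_one_eq_two]
  ring

theorem chooseZ_second_diff (a : ℤ) {b : ℤ} (hb : 0 ≤ b) :
    (chooseZ (a + 1) (b + 2) : ℤ) - 2 * chooseZ a (b + 2) + chooseZ (a - 1) (b + 2)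
      = chooseZ (a - 1) b := by
  have h₁ := chooseZ_succ_succ a (show 0 ≤ b + 1 by omega)
  have h₂ := chooseZ_succ_succ (a - 1) (show 0 ≤ b + 1 by omega)
  have h₃ := chooseZ_succ_succ (a - 1) hb
  rw [sub_add_cancel] at h₂ h₃
  rw [add_assoc, one_add_one_eq_two] at h₁ h₂
  rw [h₁, h₂, h₃]; ring

def evenConv (m : ℕ) (g : ℤ → ℤ) (i : ℤ) : ℤ :=
  ∑ j ∈ range (i.toNat / 2 + 1), (chooseZ m (i - 2 * j) : ℤ) * g j

section EvenConv

variable {m : ℕ} {g : ℤ → ℤ} {i : ℤ}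

theorem evenConv_eq_sum_range {N : ℕ} (hN : i < 2 * N) :
    evenConv m g i = ∑ j ∈ range N, (chooseZ m (i - 2 * j) : ℤ) * g j := by
  set M := min N (i.toNat / 2 + 1)
  have hvanish : ∀ j ≥ M, (chooseZ m (i - 2 * j) : ℤ) * g j = 0 := fun j hj => by
    rw [chooseZ_of_neg (by omega), Nat.cast_zero, zero_mul]
  rw [evenConv, eventually_constant_sum hvanish (min_le_right _ _),
    eventually_constant_sum hvanish (min_le_left _ _)]

theorem evenConv_eq_zero (hg : ∀ j : ℕ, 2 * (j : ℤ) ≤ i → g j = 0) : evenConv m g i = 0 := by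
  refine sum_eq_zero fun j _ => ?_
  by_cases hj : 2 * (j : ℤ) ≤ i
  · rw [hg j hj, mul_zero]
  · rw [chooseZ_of_neg (by omega), Nat.cast_zero, zero_mul]

theorem evenConv_of_neg (hi : i < 0) : evenConv m g i = 0 :=
  evenConv_eq_zero fun j hj => by omega

theorem evenConv_zero_right : evenConv m g 0 = g 0 := by
  simp [evenConv, chooseZ_zero_right]

theorem evenConv_sub (g₁ g₂ : ℤ → ℤ) :
    evenConv m (fun j => g₁ j - g₂ j) i = evenConv m g₁ i - evenConv m g₂ i := by
  simp only [evenConv, mul_sub, sum_sub_distrib]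

theorem evenConv_second_diff (g₁ g₂ g₃ : ℤ → ℤ) :
    evenConv m g₁ i - 2 * evenConv m g₂ i + evenConv m g₃ i
      = evenConv m (fun j => g₁ j - 2 * g₂ j + g₃ j) i := by
  simp only [evenConv, mul_sum, ← sum_sub_distrib, ← sum_add_distrib]
  exact sum_congr rfl fun _ _ => by ring

end EvenConv

theorem evenConv_add_two (m : ℕ) (g : ℤ → ℤ) (i : ℤ) :
    evenConv (m + 2) g i = evenConv m g i + 2 * evenConv m g (i - 1) + evenConv m g (i - 2) := by
  rw [evenConv_eq_sum_range (m := m + 2) (N := i.toNat + 1) (by omega),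
    evenConv_eq_sum_range (m := m) (i := i) (N := i.toNat + 1) (by omega),
    evenConv_eq_sum_range (i := i - 1) (N := i.toNat + 1) (by omega),
    evenConv_eq_sum_range (i := i - 2) (N := i.toNat + 1) (by omega), mul_sum,
    ← sum_add_distrib, ← sum_add_distrib]
  refine sum_congr rfl fun j _ => ?_
  rw [Nat.cast_add, Nat.cast_two, chooseZ_add_two_left (Nat.cast_nonneg m)]
  ring_nf

theorem evenConv_sub_two (m : ℕ) (g : ℤ → ℤ) (i : ℤ) :
    evenConv m g (i - 2) = evenConv m (fun j => g (j - 1)) i - chooseZ m i * g (-1) := by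
  rw [evenConv_eq_sum_range (i := i - 2) (N := i.toNat + 1) (by omega),
    evenConv_eq_sum_range (i := i) (N := i.toNat + 1 + 1) (by omega),
    sum_range_succ' (M := ℤ) _ (i.toNat + 1)]
  simp only [Nat.cast_add, Nat.cast_one, CharP.cast_eq_zero, zero_sub, add_sub_cancel_right,
    mul_zero, sub_zero]
  exact sum_congr rfl fun j _ => by ring_nf

-- Vandermonde, after re-indexing `j ↦ j + 1` in the `i - 2` term, which leaves the boundary
-- term `j = 0` behind.
theorem evenConv_add_two_shift (m : ℕ) (h : ℤ → ℤ) (i : ℤ) :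
    evenConv (m + 2) (fun j => h (i - 1 - j)) i
      = evenConv m (fun j => h (i - j)) i + 2 * evenConv m (fun j => h (i - 1 - j)) (i - 1)
        + evenConv m (fun j => h (i - 2 - j)) (i - 2) - chooseZ m i * (h i - h (i - 1)) := by
  rw [evenConv_add_two, evenConv_sub_two m (fun j => h (i - 1 - j)),
    evenConv_sub_two m (fun j => h (i - 2 - j))]
  have hshift : ∀ j : ℤ, i - 2 - (j - 1) = i - 1 - j := fun j => by ring
  simp only [sub_neg_eq_add, sub_add_cancel, sub_sub_sub_cancel_right, hshift,
    show i - 2 + 1 = i - 1 by ring]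
  ring

def pPlusPrimitive (n : ℕ) (x i : ℤ) : ℤ :=
  evenConv n (fun j => chooseZ (n + x - 1 - i + j) (n - 1)) i

-- Subtracting `n % 2` from `i` covers both parity cases in the definition of `p⁻`.
def pMinusPrimitive (n : ℕ) (x i : ℤ) : ℤ :=
  evenConv n (fun j => chooseZ (x + (n / 2 : ℕ) - 1 - j) (n - 1)) (i - n % 2)

def pPrimitive (n : ℕ) (x i : ℤ) : ℤ := pPlusPrimitive n x i - pMinusPrimitive n x i

def pConstInt (n : ℕ) (x i : ℤ) : ℤ := chooseZ (n - 2) i * chooseZ (n + x - i - 2) (n - 2)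

theorem pPlus_eq_pPlusPrimitive_sub (n s t i : ℕ) :
    pPlus n s t i = pPlusPrimitive n (s + t) i - pPlusPrimitive n s i := by
  rw [pPlusPrimitive, pPlusPrimitive, ← evenConv_sub,
    evenConv_eq_sum_range (N := i / 2 + 1) (by omega), pPlus]
  exact sum_congr rfl fun j _ => by ring_nf

theorem pMinus_eq_pMinusPrimitive_sub (n s t i : ℕ) :
    pMinus n s t i = pMinusPrimitive n (s + t) i - pMinusPrimitive n s i := by
  rw [pMinusPrimitive, pMinusPrimitive, ← evenConv_sub, pMinus]
  split_ifs with hn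
  · have hε : (n : ℤ) % 2 = 1 := by have := Nat.odd_iff.mp hn; omega
    rw [hε, evenConv_eq_sum_range (N := (i + 1) / 2) (by omega)]
  · have hε : (n : ℤ) % 2 = 0 := by have := Nat.not_odd_iff.mp hn; omega
    rw [hε, sub_zero, evenConv_eq_sum_range (N := i / 2 + 1) (by omega)]

theorem pFun_eq_pPrimitive (n s t : ℕ) (i : ℤ) :
    pFun n s t i = pPrimitive n (s + t) i - pPrimitive n s i + pConstInt n s i := by
  rcases lt_or_ge i 0 with hi | hi
  · have hε : i - n % 2 < 0 := by omega
    simp only [pFun, if_neg (not_le.mpr hi), pPrimitive, pPlusPrimitive, pMinusPrimitive,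
      pConstInt, evenConv_of_neg hi, evenConv_of_neg hε, chooseZ_of_neg hi]
    ring
  · obtain ⟨k, rfl⟩ := Int.eq_ofNat_of_zero_le hi
    rw [pFun, if_pos hi, Int.toNat_natCast, pPlus_eq_pPlusPrimitive_sub,
      pMinus_eq_pMinusPrimitive_sub, pPrimitive, pPrimitive, pConst, pConstInt]
    ring

theorem pMinusPrimitive_eq_zero {n : ℕ} (hn : 1 ≤ n) {x : ℤ} (hx : x ≤ 0) (i : ℤ) :
    pMinusPrimitive n x i = 0 :=
  evenConv_eq_zero fun j _ => by rw [chooseZ_of_lt (by omega), Nat.cast_zero]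

theorem pPrimitive_zero {n : ℕ} (hn : 2 ≤ n) (i : ℤ) : pPrimitive n 0 i = pConstInt n 0 i := by
  rw [pPrimitive, pMinusPrimitive_eq_zero (by omega) le_rfl, sub_zero, pPlusPrimitive, pConstInt]
  rcases eq_or_ne i 0 with rfl | hi
  · rw [evenConv_zero_right]
    simp only [add_zero, sub_zero]
    rw [chooseZ_self (by omega), chooseZ_zero_right (by omega), chooseZ_self (by omega)]
    rfl
  · rw [evenConv_eq_zero fun j hj => by rw [chooseZ_of_lt (by omega), Nat.cast_zero]]
    rcases lt_or_gt_of_ne hi with hi | hi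
    · rw [chooseZ_of_neg hi]; simp
    · rw [chooseZ_of_lt (a := n + 0 - i - 2) (by omega)]; simp

theorem pPrimitive_neg_one {n : ℕ} (hn : 1 ≤ n) (i : ℤ) :
    pPrimitive n (-1) i = pConstInt n (-1) i := by
  rw [pPrimitive, pMinusPrimitive_eq_zero hn (by omega), sub_zero, pPlusPrimitive, pConstInt,
    evenConv_eq_zero fun j hj => by rw [chooseZ_of_lt (by omega), Nat.cast_zero]]
  rcases lt_or_ge i 0 with hi | hi
  · rw [chooseZ_of_neg hi]; simp
  · rw [chooseZ_of_lt (a := n + -1 - i - 2) (by omega)]; simp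

theorem pConstInt_second_diff {m : ℕ} (hm : 2 ≤ m) (x i : ℤ) :
    pConstInt (m + 2) (x + 1) i - 2 * pConstInt (m + 2) x i + pConstInt (m + 2) (x - 1) i
      = chooseZ m i * chooseZ (m + x - 1 - i) (m - 2) := by
  have h := chooseZ_second_diff (m + x - i) (show (0 : ℤ) ≤ m - 2 by omega)
  simp only [pConstInt, Nat.cast_add, Nat.cast_ofNat, add_sub_cancel_right]
  linear_combination (norm := ring_nf) (chooseZ m i : ℤ) * h

theorem pMinusPrimitive_add_two {m : ℕ} (hm : 1 ≤ m) (x i : ℤ) :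
    pMinusPrimitive m x i + 2 * pMinusPrimitive m x (i - 1) + pMinusPrimitive m x (i - 2)
      = pMinusPrimitive (m + 2) (x + 1) i - 2 * pMinusPrimitive (m + 2) x i
        + pMinusPrimitive (m + 2) (x - 1) i := by
  have hε : ((m + 2 : ℕ) : ℤ) % 2 = (m : ℤ) % 2 := by push_cast; omega
  have hg : (fun j : ℤ => (chooseZ (x + 1 + ((m + 2) / 2 : ℕ) - 1 - j) ((m + 2 : ℕ) - 1) : ℤ)
      - 2 * chooseZ (x + ((m + 2) / 2 : ℕ) - 1 - j) ((m + 2 : ℕ) - 1)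
      + chooseZ (x - 1 + ((m + 2) / 2 : ℕ) - 1 - j) ((m + 2 : ℕ) - 1))
      = fun j => (chooseZ (x + (m / 2 : ℕ) - 1 - j) (m - 1) : ℤ) := by
    funext j
    have h := chooseZ_second_diff (x + (m / 2 : ℕ) - j) (show (0 : ℤ) ≤ m - 1 by omega)
    rw [show (m + 2) / 2 = m / 2 + 1 by omega]
    simp only [Nat.cast_add, Nat.cast_one, Nat.cast_ofNat]
    linear_combination (norm := ring_nf) h
  simp only [pMinusPrimitive]
  rw [evenConv_second_diff, hg, evenConv_add_two, hε]
  ring_nf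

theorem pPlusPrimitive_add_two {m : ℕ} (hm : 2 ≤ m) (x i : ℤ) :
    pPlusPrimitive m x i + 2 * pPlusPrimitive m x (i - 1) + pPlusPrimitive m x (i - 2)
      = pPlusPrimitive (m + 2) (x + 1) i - 2 * pPlusPrimitive (m + 2) x i
        + pPlusPrimitive (m + 2) (x - 1) i
        - (pConstInt (m + 2) (x + 1) i - 2 * pConstInt (m + 2) x i
          + pConstInt (m + 2) (x - 1) i) := by
  have hshift := evenConv_add_two_shift m (fun y => chooseZ (m + x - 1 - y) (m - 1)) i
  have hpascal := chooseZ_succ_succ (m + x - 1 - i) (show (0 : ℤ) ≤ m - 2 by omega)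
  rw [pConstInt_second_diff hm]
  simp only [pPlusPrimitive]
  have hg : (fun j : ℤ => (chooseZ ((m + 2 : ℕ) + (x + 1) - 1 - i + j) ((m + 2 : ℕ) - 1) : ℤ)
      - 2 * chooseZ ((m + 2 : ℕ) + x - 1 - i + j) ((m + 2 : ℕ) - 1)
      + chooseZ ((m + 2 : ℕ) + (x - 1) - 1 - i + j) ((m + 2 : ℕ) - 1))
      = fun j => (chooseZ (m + x - 1 - (i - 1 - j)) (m - 1) : ℤ) := by
    funext j
    have h := chooseZ_second_diff (m + x + 1 - i + j) (show (0 : ℤ) ≤ m - 1 by omega)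
    simp only [Nat.cast_add, Nat.cast_ofNat]
    linear_combination (norm := ring_nf) h
  rw [evenConv_second_diff, hg]
  linear_combination (norm := ring_nf) -hshift - (chooseZ m i : ℤ) * hpascal

def pPotential (n : ℕ) (x i : ℤ) : ℤ := pPrimitive n x i - pConstInt n x i

theorem pPrimitive_add_two {m : ℕ} (hm : 2 ≤ m) (x i : ℤ) :
    pPrimitive m x i + 2 * pPrimitive m x (i - 1) + pPrimitive m x (i - 2)
      = pPotential (m + 2) (x + 1) i - 2 * pPotential (m + 2) x i
        + pPotential (m + 2) (x - 1) i := by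
  simp only [pPotential, pPrimitive]
  linear_combination
    pPlusPrimitive_add_two hm x i - pMinusPrimitive_add_two (m := m) (by omega) x i

theorem pFun_zero_left {m : ℕ} (hm : 2 ≤ m) (ℓ : ℕ) (i : ℤ) :
    pFun m 0 ℓ i = pPrimitive m ℓ i := by
  rw [pFun_eq_pPrimitive, Nat.cast_zero, zero_add, pPrimitive_zero hm]
  ring

theorem pFunpp_zero_left {m : ℕ} (hm : 2 ≤ m) (ℓ : ℕ) (i : ℤ) :
    pFunpp m 0 ℓ i = pPotential (m + 2) (ℓ + 1) i - 2 * pPotential (m + 2) ℓ i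
      + pPotential (m + 2) (ℓ - 1) i := by
  rw [pFunpp, pFun_zero_left hm, pFun_zero_left hm, pFun_zero_left hm, pPrimitive_add_two hm]

theorem pFun_sub_pFun_succ_pred {n : ℕ} (s : ℕ) {t : ℕ} (ht : 1 ≤ t) (i : ℤ) :
    pFun n s t i - pFun n (s + 1) (t - 1) i = pPotential n (s + 1) i - pPotential n s i := by
  rw [pFun_eq_pPrimitive, pFun_eq_pPrimitive, pPotential, pPotential, Nat.cast_sub ht]
  push_cast
  ring_nf

theorem pFun_sub_pFun_succ_pred_eq_sum {n : ℕ} (hn : 4 ≤ n) (s : ℕ) {t : ℕ} (ht : 1 ≤ t) (i : ℤ) :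
    pFun n s t i - pFun n (s + 1) (t - 1) i = ∑ ℓ ∈ range (s + 1), pFunpp (n - 2) 0 ℓ i := by
  obtain ⟨m, rfl⟩ : ∃ m, n = m + 2 := ⟨n - 2, by omega⟩
  have hm : 2 ≤ m := by omega
  have hstart : pPotential (m + 2) 0 i - pPotential (m + 2) (-1) i = 0 := by
    rw [pPotential, pPotential, pPrimitive_zero (by omega), pPrimitive_neg_one (by omega)]
    ring
  let diff (x : ℕ) : ℤ := pPotential (m + 2) x i - pPotential (m + 2) (x - 1) i
  calc pFun (m + 2) s t i - pFun (m + 2) (s + 1) (t - 1) i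
      = diff (s + 1) - diff 0 := by
        rw [pFun_sub_pFun_succ_pred s ht]; simp [diff, hstart]
    _ = ∑ ℓ ∈ range (s + 1), (diff (ℓ + 1) - diff ℓ) := (sum_range_sub diff (s + 1)).symm
    _ = ∑ ℓ ∈ range (s + 1), pFunpp (m + 2 - 2) 0 ℓ i := by
        refine sum_congr rfl fun ℓ _ => ?_
        rw [Nat.add_sub_cancel, pFunpp_zero_left hm]
        simp only [diff, Nat.cast_add, Nat.cast_one, add_sub_cancel_right]
        ring

theorem sum_Icc_sub_pred {R : Type*} [AddCommGroup R] (a : ℕ → R) (t : ℕ) {m : ℕ}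
    (hm : 1 ≤ m) :
    ∑ ℓ ∈ Icc 1 m, (a (t + ℓ) - a (t + ℓ - 1)) = a (t + m) - a t := by
  simpa using sum_Icc_sub hm fun ℓ => a (t + ℓ - 1)

theorem sum_range_eq_summation_by_parts {R : Type*} [CommRing R] (a : ℕ → R) (t m : ℕ) :
    ∑ ℓ ∈ range (t + m + 1), a ℓ
      = ∑ ℓ ∈ range t, a ℓ + ((m : R) + 1) * a t
        + ∑ ℓ ∈ Icc 1 m, ((m : R) + 1 - ℓ) * (a (t + ℓ) - a (t + ℓ - 1)) := by
  induction m with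
  | zero => simp [sum_range_succ]
  | succ m ih =>
    have hsplit :
        ∑ ℓ ∈ Icc 1 (m + 1), (((m + 1 : ℕ) : R) + 1 - ℓ) * (a (t + ℓ) - a (t + ℓ - 1))
          = ∑ ℓ ∈ Icc 1 (m + 1), ((m : R) + 1 - ℓ) * (a (t + ℓ) - a (t + ℓ - 1))
            + ∑ ℓ ∈ Icc 1 (m + 1), (a (t + ℓ) - a (t + ℓ - 1)) := by
      rw [← sum_add_distrib]
      exact sum_congr rfl fun ℓ _ => by push_cast; ring
    rw [hsplit, sum_Icc_sub_pred a t (by omega), sum_Icc_succ_top (by omega), ← add_assoc t,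
      sum_range_succ, ih]
    push_cast
    ring

theorem pFun_sub_pred_right (n a : ℕ) {b : ℕ} (hb : 1 ≤ b) (i : ℤ) :
    pFun n a b i - pFun n a (b - 1) i = pFun n 0 (a + b) i - pFun n 0 (a + b - 1) i := by
  simp only [pFun_eq_pPrimitive, Nat.cast_sub hb, Nat.cast_sub (show 1 ≤ a + b by omega)]
  push_cast
  ring_nf

theorem pFunpp_sub_pred_right (n a : ℕ) {b : ℕ} (hb : 1 ≤ b) (i : ℤ) :
    pFunpp n a b i - pFunpp n a (b - 1) i
      = pFunpp n 0 (a + b) i - pFunpp n 0 (a + b - 1) i := by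
  simp only [pFunpp]
  linear_combination pFun_sub_pred_right n a hb i + 2 * pFun_sub_pred_right n a hb (i - 1)
    + pFun_sub_pred_right n a hb (i - 2)

/-- For all `n ≥ 4`, `s ≥ 0`, `t ≥ 2` and `i ≥ 0`: if `s ≤ t` then
`p(n,s,t,i) - p(n,s+1,t-1,i) = Σ_{ℓ=0}^{s} p̿(n-2,0,ℓ,i)`; and if `s ≥ t` then
`p(n,s,t,i) - p(n,s+1,t-1,i) = Σ_{ℓ=0}^{t-1} p̿(n-2,0,ℓ,i) + (s-t+1)·p̿(n-2,0,t,i)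
  + Σ_{ℓ=1}^{s-t} (s-t+1-ℓ)·[p̿(n-2,ℓ,t,i) - p̿(n-2,ℓ,t-1,i)]`. -/
theorem p_self_recurrence (n s t : ℕ) (hn : 4 ≤ n) (ht : 2 ≤ t) (i : ℕ) :
    (s ≤ t →
      pFun n s t (i : ℤ) - pFun n (s + 1) (t - 1) (i : ℤ)
        = ∑ ℓ ∈ Finset.range (s + 1), pFunpp (n - 2) 0 ℓ (i : ℤ)) ∧
    (t ≤ s →
      pFun n s t (i : ℤ) - pFun n (s + 1) (t - 1) (i : ℤ)
        = ∑ ℓ ∈ Finset.range t, pFunpp (n - 2) 0 ℓ (i : ℤ)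
        + ((s : ℤ) - t + 1) * pFunpp (n - 2) 0 t (i : ℤ)
        + ∑ ℓ ∈ Finset.Icc 1 (s - t),
            ((s : ℤ) - t + 1 - ℓ) *
              (pFunpp (n - 2) ℓ t (i : ℤ) - pFunpp (n - 2) ℓ (t - 1) (i : ℤ))) := by
  refine ⟨fun _ => pFun_sub_pFun_succ_pred_eq_sum hn s (by omega) i, fun hts => ?_⟩
  obtain ⟨m, rfl⟩ : ∃ m, s = t + m := ⟨s - t, by omega⟩
  rw [pFun_sub_pFun_succ_pred_eq_sum hn _ (by omega), sum_range_eq_summation_by_parts,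
    Nat.add_sub_cancel_left]
  simp only [Nat.cast_add, add_sub_cancel_left]
  refine congrArg (_ + ·) (sum_congr rfl fun ℓ _ => ?_)
  rw [pFunpp_sub_pred_right (n - 2) ℓ (b := t) (by omega), add_comm ℓ t]
end
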